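/- arXiv:1811.02386 — 6 statements merged into one kernel-verified Lean document; each statement's English description precedes it below -/
import Mathlib

section
/- Countable Erdős–Rado theorem: if X is a set with |X| > 2^{aleph_0} and the set of unordered pairs [X]^2 is covered by countably many sets P_n (n < omega), then there exist an uncountable subset S of X and an index n_0 such that every unordered pair from S belongs to P_{n_0}. -/
open Cardinal Set
open scoped Classical

universe u

namespace ERhelper

variable {X : Type u}

noncomputable def col (P : ℕ → Set (Set X)) (s : Set X) : ℕ :=
  if h : ∃ n, s ∈ P n then h.choose else 0

lemma col_spec {P : ℕ → Set (Set X)} {s : Set X} (h : ∃ n, s ∈ P n) : s ∈ P (col P s) := by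
  rw [col, dif_pos h]; exact h.choose_spec

noncomputable def seqF (P : ℕ → Set (Set X)) (x : X) (α : Ordinal.{u})
    (ih : ∀ β, β < α → Option X) : Option X :=
  if h : ∃ β, ∃ hβ : β < α, ih β hβ = some x then none
  else some ((IsWellFounded.wf (r := WellOrderingRel (α := X))).min
    {y | (¬ ∃ β, ∃ hβ : β < α, ih β hβ = some y) ∧
      ∀ β (hβ : β < α) (z : X), ih β hβ = some z → col P {z, y} = col P {z, x}}
    ⟨x, h, fun _ _ _ _ => rfl⟩)

noncomputable def seq (P : ℕ → Set (Set X)) (x : X) : Ordinal.{u} → Option X :=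
  Ordinal.lt_wf.fix (seqF P x)

lemma seq_def (P : ℕ → Set (Set X)) (x : X) (α : Ordinal.{u}) :
    seq P x α = seqF P x α (fun β _ => seq P x β) :=
  Ordinal.lt_wf.fix_eq (seqF P x) α

def Q (P : ℕ → Set (Set X)) (x : X) (α : Ordinal.{u}) : Set X :=
  {y | (¬ ∃ β, ∃ hβ : β < α, seq P x β = some y) ∧
    ∀ β (hβ : β < α) (z : X), seq P x β = some z → col P {z, y} = col P {z, x}}

lemma seq_eq_none_iff (P : ℕ → Set (Set X)) (x : X) (α : Ordinal.{u}) :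
    seq P x α = none ↔ ∃ β, ∃ _ : β < α, seq P x β = some x := by
  rw [seq_def]; unfold seqF
  split_ifs with h
  · simpa using h
  · simpa using h

lemma x_mem_Q {P : ℕ → Set (Set X)} {x : X} {α : Ordinal.{u}}
    (h : ¬ ∃ β, ∃ _ : β < α, seq P x β = some x) : x ∈ Q P x α :=
  ⟨h, fun _ _ _ _ => rfl⟩

lemma seq_eq_some {P : ℕ → Set (Set X)} {x : X} {α : Ordinal.{u}}
    (h : ¬ ∃ β, ∃ _ : β < α, seq P x β = some x) :
    seq P x α = some ((IsWellFounded.wf (r := WellOrderingRel (α := X))).min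
      (Q P x α) ⟨x, x_mem_Q h⟩) := by
  rw [seq_def]; unfold seqF
  rw [dif_neg h]
  rfl

lemma mem_Q_of_some {P : ℕ → Set (Set X)} {x u' : X} {α : Ordinal.{u}}
    (h : seq P x α = some u') : u' ∈ Q P x α := by
  have hni : ¬ ∃ β, ∃ _ : β < α, seq P x β = some x := by
    intro hc
    rw [(seq_eq_none_iff P x α).2 hc] at h
    cases h
  rw [seq_eq_some hni] at h
  have := Option.some_injective _ h
  rw [← this]
  exact WellFounded.min_mem _ _ _

lemma seq_ne {P : ℕ → Set (Set X)} {x u' v : X} {β α : Ordinal.{u}} (hβα : β < α)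
    (hα : seq P x α = some u') (hβ : seq P x β = some v) : u' ≠ v := by
  intro e
  exact (mem_Q_of_some hα).1 ⟨β, hβα, by rw [hβ, e]⟩

lemma seq_col {P : ℕ → Set (Set X)} {x u' v : X} {β α : Ordinal.{u}} (hβα : β < α)
    (hα : seq P x α = some u') (hβ : seq P x β = some v) :
    col P {v, u'} = col P {v, x} :=
  (mem_Q_of_some hα).2 β hβα v hβ


lemma caseA (P : ℕ → Set (Set X))
    (hcov : ∀ x y : X, x ≠ y → ∃ n, ({x, y} : Set X) ∈ P n)
    (x : X) (hx : ∀ α < (Cardinal.aleph 1).ord, seq P x α ≠ none) :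
    ∃ (S : Set X) (n₀ : ℕ), ¬S.Countable ∧
      ∀ u ∈ S, ∀ v ∈ S, u ≠ v → ({u, v} : Set X) ∈ P n₀ := by
  set ω1 : Ordinal.{u} := (Cardinal.aleph 1).ord with hw
  have hsome : ∀ a : ↥(Iio ω1), (seq P x a.1).isSome :=
    fun a => Option.ne_none_iff_isSome.mp (hx a.1 a.2)
  set val : ↥(Iio ω1) → X := fun a => (seq P x a.1).get (hsome a) with hv
  have hval : ∀ a, seq P x a.1 = some (val a) := fun a => (Option.some_get (hsome a)).symm
  have hvalinj : Function.Injective val := by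
    intro a b hab
    by_contra hne
    have h1 : a.1 ≠ b.1 := fun e => hne (Subtype.ext e)
    rcases h1.lt_or_gt with h | h
    · exact seq_ne h (hval b) (hval a) hab.symm
    · exact seq_ne h (hval a) (hval b) hab
  have hbig : ¬ Countable ↥(Iio ω1) := by
    rw [← Cardinal.mk_le_aleph0_iff, not_le, Ordinal.mk_Iio_ordinal, hw, Cardinal.card_ord]
    simpa using Cardinal.lift_lt.{1, u+1}.mpr Cardinal.aleph0_lt_aleph_one
  obtain ⟨n₀, hn₀⟩ : ∃ n₀ : ℕ,
      ¬ {a : ↥(Iio ω1) | col P {val a, x} = n₀}.Countable := by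
    by_contra hall
    push_neg at hall
    have he : (univ : Set ↥(Iio ω1)) = ⋃ n, {a | col P {val a, x} = n} := by
      ext a; simp
    have : (univ : Set ↥(Iio ω1)).Countable := by
      rw [he]; exact Set.countable_iUnion hall
    exact hbig (Set.countable_univ_iff.mp this)
  refine ⟨val '' {a | col P {val a, x} = n₀}, n₀, ?_, ?_⟩
  · intro hS
    have hpre := hS.preimage hvalinj
    exact hn₀ (hpre.mono (fun a ha => Set.mem_preimage.mpr (Set.mem_image_of_mem _ ha)))
  · rintro u ⟨a, ha, rfl⟩ v ⟨b, hb, rfl⟩ huv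
    have h1 : a.1 ≠ b.1 := fun e => huv (congrArg val (Subtype.ext e))
    rcases h1.lt_or_gt with h | h
    · have hc : col P {val a, val b} = n₀ := by
        rw [seq_col h (hval b) (hval a)]; exact ha
      exact hc ▸ col_spec (hcov _ _ huv)
    · have hc : col P {val b, val a} = n₀ := by
        rw [seq_col h (hval a) (hval b)]; exact hb
      rw [Set.pair_comm]
      exact hc ▸ col_spec (hcov _ _ huv.symm)


noncomputable def colPair (P : ℕ → Set (Set X)) (o : Option X) (x : X) : ℕ :=
  o.elim 0 (fun z => col P {z, x})

lemma min_congr {s t : Set X} (hst : s = t) (hs : s.Nonempty) (ht : t.Nonempty) :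
    (IsWellFounded.wf (r := WellOrderingRel (α := X))).min s hs
      = (IsWellFounded.wf (r := WellOrderingRel (α := X))).min t ht := by
  subst hst; rfl

lemma determined {P : ℕ → Set (Set X)} {x y : X} {ρ : Ordinal.{u}}
    (hx : ∀ α < ρ, seq P x α ≠ none) (hy : ∀ α < ρ, seq P y α ≠ none)
    (hcol : ∀ β < ρ, colPair P (seq P x β) x = colPair P (seq P y β) y) :
    ∀ α < ρ, seq P x α = seq P y α := by
  intro α
  induction α using Ordinal.induction with
  | h α IH =>
    intro hα
    have hseq : ∀ β, β < α → seq P x β = seq P y β := fun β hβ => IH β hβ (hβ.trans hα)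
    have hzy : ∀ β, β < α → ∀ z : X, seq P y β = some z → col P {z, x} = col P {z, y} := by
      intro β hβ z hz
      have hc := hcol β (hβ.trans hα)
      rw [hseq β hβ, hz] at hc
      exact hc
    have hnx : ¬ ∃ β, ∃ _ : β < α, seq P x β = some x :=
      fun hc => hx α hα ((seq_eq_none_iff P x α).2 hc)
    have hny : ¬ ∃ β, ∃ _ : β < α, seq P y β = some y :=
      fun hc => hy α hα ((seq_eq_none_iff P y α).2 hc)
    rw [seq_eq_some hnx, seq_eq_some hny]
    congr 1
    apply min_congr
    ext w
    simp only [Q, mem_setOf_eq]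
    constructor
    · rintro ⟨h1, h2⟩
      refine ⟨fun hc => h1 ?_, ?_⟩
      · obtain ⟨β, hβ, hcc⟩ := hc
        exact ⟨β, hβ, (hseq β hβ).trans hcc⟩
      · intro β hβ z hz
        have := h2 β hβ z ((hseq β hβ).trans hz)
        rw [this]
        exact hzy β hβ z hz
    · rintro ⟨h1, h2⟩
      refine ⟨fun hc => h1 ?_, ?_⟩
      · obtain ⟨β, hβ, hcc⟩ := hc
        exact ⟨β, hβ, (hseq β hβ).symm.trans hcc⟩
      · intro β hβ z hz
        have hz' : seq P y β = some z := (hseq β hβ).symm.trans hz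
        have := h2 β hβ z hz'
        rw [this]
        exact (hzy β hβ z hz').symm

lemma caseB (P : ℕ → Set (Set X))
    (hB : ∀ x : X, ∃ α < (Cardinal.aleph 1).ord, seq P x α = none) :
    Cardinal.mk X ≤ 2 ^ Cardinal.aleph0 := by
  classical
  set ω1 : Ordinal.{u} := (Cardinal.aleph 1).ord with hw
  have hne : ∀ x : X, {α : Ordinal.{u} | seq P x α = none}.Nonempty := fun x => by
    obtain ⟨α, _, h⟩ := hB x; exact ⟨α, h⟩
  set ρ : X → Ordinal.{u} := fun x => Ordinal.lt_wf.min _ (hne x) with hρdef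
  have hρ_none : ∀ x, seq P x (ρ x) = none := fun x => Ordinal.lt_wf.min_mem _ (hne x)
  have hρ_lt : ∀ x, ρ x < ω1 := fun x => by
    obtain ⟨α, hα, h⟩ := hB x
    exact lt_of_le_of_lt (Ordinal.lt_wf.min_le h) hα
  have hρ_least : ∀ x, ∀ β < ρ x, seq P x β ≠ none := fun x β hβ h =>
    Ordinal.lt_wf.not_lt_min _ h hβ
  have hbx : ∀ x, ∃ β, β < ρ x ∧ seq P x β = some x := fun x => by
    obtain ⟨β, hβ, h⟩ := (seq_eq_none_iff P x (ρ x)).1 (hρ_none x)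
    exact ⟨β, hβ, h⟩
  choose b hb1 hb2 using hbx
  let T := Σ t : ↥(Iio ω1), ((↥(Iio t.1) → ℕ) × ↥(Iio t.1))
  let F : X → T := fun x =>
    ⟨⟨ρ x, hρ_lt x⟩, fun β => colPair P (seq P x β.1) x, ⟨b x, hb1 x⟩⟩
  have hFinj : Function.Injective F := by
    intro x y h
    have hρe : ρ x = ρ y := congrArg (fun t : T => t.1.1) h
    have hbe : b x = b y := congrArg (fun t : T => (t.2.2).1) h
    have hcol : ∀ β < ρ x, colPair P (seq P x β) x = colPair P (seq P y β) y := by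
      intro β hβ
      have hge := congrFun (congrArg (fun t : T => fun γ : Ordinal.{u} =>
        if hγ : γ < t.1.1 then t.2.1 ⟨γ, hγ⟩ else 0) h) β
      beta_reduce at hge
      rw [dif_pos hβ, dif_pos (show β < ρ y from hρe ▸ hβ)] at hge
      exact hge
    have hdet := determined (hρ_least x) (fun α hα => hρ_least y α (hρe ▸ hα)) hcol
    have h2 : seq P y (b x) = some y := by rw [hbe]; exact hb2 y
    have h3 : seq P y (b x) = some x := (hdet (b x) (hb1 x)).symm.trans (hb2 x)
    exact Option.some_injective _ (h3.symm.trans h2)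
  have hcard : Cardinal.lift.{u+1} (Cardinal.mk X) ≤ Cardinal.lift.{u} (Cardinal.mk T) :=
    Cardinal.lift_mk_le'.mpr ⟨⟨F, hFinj⟩⟩
  have hbound : ∀ t : ↥(Iio ω1),
      (#((↥(Iio t.1) → ℕ) × ↥(Iio t.1)) : Cardinal.{u+1}) ≤ 2 ^ (aleph0 : Cardinal.{u+1}) := by
    intro t
    have hIio : #(↥(Iio t.1)) ≤ (aleph0 : Cardinal.{u+1}) := by
      rw [Ordinal.mk_Iio_ordinal]
      have h1 : (t.1).card < Cardinal.aleph 1 := Cardinal.lt_ord.mp t.2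
      have h0 : (t.1).card ≤ Cardinal.aleph0 := by
        rwa [← Cardinal.succ_aleph0, Order.lt_succ_iff] at h1
      calc Cardinal.lift.{u+1} (t.1).card ≤ Cardinal.lift.{u+1} Cardinal.aleph0 :=
            Cardinal.lift_le.mpr h0
        _ = aleph0 := Cardinal.lift_aleph0
    have harrow : #(↥(Iio t.1) → ℕ) ≤ 2 ^ (aleph0 : Cardinal.{u+1}) := by
      rw [Cardinal.mk_arrow]
      have : Cardinal.lift.{u+1} #ℕ = (aleph0 : Cardinal.{u+1}) := by simp
      rw [this, Cardinal.lift_id']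
      calc (aleph0 : Cardinal.{u+1}) ^ #(↥(Iio t.1))
          ≤ (aleph0 : Cardinal.{u+1}) ^ (aleph0 : Cardinal.{u+1}) :=
            Cardinal.power_le_power_left Cardinal.aleph0_ne_zero hIio
        _ = 2 ^ (aleph0 : Cardinal.{u+1}) := Cardinal.power_self_eq le_rfl
    have hc2 : (aleph0 : Cardinal.{u+1}) ≤ 2 ^ (aleph0 : Cardinal.{u+1}) :=
      (Cardinal.cantor _).le
    rw [Cardinal.mk_prod, Cardinal.lift_id, Cardinal.lift_id]
    calc #(↥(Iio t.1) → ℕ) * #(↥(Iio t.1))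
        ≤ 2 ^ (aleph0 : Cardinal.{u+1}) * 2 ^ (aleph0 : Cardinal.{u+1}) :=
          mul_le_mul' harrow (hIio.trans hc2)
      _ = 2 ^ (aleph0 : Cardinal.{u+1}) := Cardinal.mul_eq_self hc2
  have hlift2 : Cardinal.lift.{u+1} ((2:Cardinal.{u}) ^ Cardinal.aleph0)
      = (2:Cardinal.{u+1}) ^ (aleph0 : Cardinal.{u+1}) := by
    rw [Cardinal.lift_power]; norm_num
  have hT : (#T : Cardinal.{u+1}) ≤ 2 ^ (aleph0 : Cardinal.{u+1}) := by
    have hc2 : (aleph0 : Cardinal.{u+1}) ≤ 2 ^ (aleph0 : Cardinal.{u+1}) := (Cardinal.cantor _).le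
    have hIw : #(↥(Iio ω1)) ≤ 2 ^ (aleph0 : Cardinal.{u+1}) := by
      rw [Ordinal.mk_Iio_ordinal, hw, Cardinal.card_ord]
      have ha1 : (Cardinal.aleph 1 : Cardinal.{u}) ≤ 2 ^ (Cardinal.aleph0 : Cardinal.{u}) := by
        rw [← Cardinal.succ_aleph0]
        exact Order.succ_le_of_lt (Cardinal.cantor _)
      calc Cardinal.lift.{u+1} (Cardinal.aleph 1)
          ≤ Cardinal.lift.{u+1} ((2:Cardinal.{u}) ^ Cardinal.aleph0) := Cardinal.lift_le.mpr ha1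
        _ = 2 ^ (aleph0 : Cardinal.{u+1}) := hlift2
    calc (#T : Cardinal.{u+1})
        = Cardinal.sum (fun t : ↥(Iio ω1) => #((↥(Iio t.1) → ℕ) × ↥(Iio t.1))) :=
          Cardinal.mk_sigma _
      _ ≤ Cardinal.sum (fun _ : ↥(Iio ω1) => 2 ^ (aleph0 : Cardinal.{u+1})) :=
          Cardinal.sum_le_sum _ _ hbound
      _ = #(↥(Iio ω1)) * 2 ^ (aleph0 : Cardinal.{u+1}) := Cardinal.sum_const' _ _
      _ ≤ (2 ^ (aleph0 : Cardinal.{u+1})) * 2 ^ (aleph0 : Cardinal.{u+1}) :=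
          mul_le_mul_left hIw _
      _ = 2 ^ (aleph0 : Cardinal.{u+1}) := Cardinal.mul_eq_self hc2
  have hfinal : Cardinal.lift.{u+1} (#X) ≤ Cardinal.lift.{u+1} ((2:Cardinal.{u}) ^ Cardinal.aleph0) := by
    refine hcard.trans ?_
    rw [Cardinal.lift_id'.{u, u+1}]
    exact hT.trans (le_of_eq hlift2.symm)
  exact Cardinal.lift_le.mp hfinal

end ERhelper

/-- Countable Erdős–Rado theorem: if `|X| > 2^ℵ₀` and all unordered pairs from `X`
are covered by countably many pieces `P n`, then some piece contains all pairs from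
an uncountable set `S`. -/
theorem stmt1 {X : Type*} (hX : 2 ^ Cardinal.aleph0 < Cardinal.mk X)
    (P : ℕ → Set (Set X))
    (hcov : ∀ x y : X, x ≠ y → ∃ n, ({x, y} : Set X) ∈ P n) :
    ∃ (S : Set X) (n₀ : ℕ), ¬S.Countable ∧
      ∀ x ∈ S, ∀ y ∈ S, x ≠ y → ({x, y} : Set X) ∈ P n₀ := by
  by_cases hA : ∃ x : X, ∀ α < (Cardinal.aleph 1).ord, ERhelper.seq P x α ≠ none
  · obtain ⟨x, hx⟩ := hA
    exact ERhelper.caseA P hcov x hx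
  · push_neg at hA
    exact absurd (ERhelper.caseB P (by simpa using hA)) (not_le.mpr hX)
end

section
/- Let X be a normal space and S an uncountable closed discrete subset of X such that there is a pairwise disjoint family {V_x : x in S} of open sets with x in V_x. Then X is not dually weakly Lindelöf; in fact, the neighbourhood assignment sending x in S to V_x and x not in S to X \ S has no weakly Lindelöf kernel. -/
open Classical in
/-- A normal space containing an uncountable closed discrete set `S` expanded by a
pairwise disjoint family of open sets is not dually weakly Lindelöf; in fact the
neighbourhood assignment sending `x ∈ S` to `V x` and `x ∉ S` to `X \ S` has no
weakly Lindelöf kernel. -/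
theorem stmt7 {X : Type*} [TopologicalSpace X] [NormalSpace X]
    (S : Set X) (hS : ¬S.Countable) (hScl : IsClosed S) (hSd : DiscreteTopology S)
    (V : X → Set X) (hVopen : ∀ x ∈ S, IsOpen (V x)) (hVmem : ∀ x ∈ S, x ∈ V x)
    (hVdisj : ∀ x ∈ S, ∀ y ∈ S, x ≠ y → Disjoint (V x) (V y)) :
    (¬ ∀ φ : X → Set X, (∀ x, IsOpen (φ x) ∧ x ∈ φ x) →
        ∃ Y : Set X,
          (∀ 𝒰 : Set (Set Y), (∀ u ∈ 𝒰, IsOpen u) → ⋃₀ 𝒰 = Set.univ →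
            ∃ 𝒱 ⊆ 𝒰, 𝒱.Countable ∧ Dense (⋃₀ 𝒱)) ∧
          ⋃ y ∈ Y, φ y = Set.univ) ∧
    (∀ Y : Set X,
        ⋃ y ∈ Y, (if y ∈ S then V y else Sᶜ) = Set.univ →
        ¬ ∀ 𝒰 : Set (Set Y), (∀ u ∈ 𝒰, IsOpen u) → ⋃₀ 𝒰 = Set.univ →
            ∃ 𝒱 ⊆ 𝒰, 𝒱.Countable ∧ Dense (⋃₀ 𝒱)) := by
  have main : ∀ Y : Set X,
      ⋃ y ∈ Y, (if y ∈ S then V y else Sᶜ) = Set.univ →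
      ¬ ∀ 𝒰 : Set (Set Y), (∀ u ∈ 𝒰, IsOpen u) → ⋃₀ 𝒰 = Set.univ →
          ∃ 𝒱 ⊆ 𝒰, 𝒱.Countable ∧ Dense (⋃₀ 𝒱) := by
    intro Y hYcov hWL
    -- S ⊆ Y
    have hSsubY : S ⊆ Y := by
      intro s hs
      have hmem : s ∈ ⋃ y ∈ Y, (if y ∈ S then V y else Sᶜ) := by
        rw [hYcov]; exact Set.mem_univ s
      obtain ⟨y, hyY, hy⟩ := Set.mem_iUnion₂.1 hmem
      by_cases hyS : y ∈ S
      · rw [if_pos hyS] at hy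
        rcases eq_or_ne y s with rfl | hne
        · exact hyY
        · exact absurd (Set.not_disjoint_iff.2 ⟨s, hy, hVmem s hs⟩)
            (fun h => h (hVdisj y hyS s hs hne))
      · rw [if_neg hyS] at hy
        exact absurd hs hy
    -- get open G with S ⊆ G and closure G ⊆ ⋃ V s
    obtain ⟨G, hGopen, hSG, hGcl⟩ := normal_exists_closure_subset hScl
      (isOpen_biUnion hVopen)
      (fun s hs => Set.mem_biUnion hs (hVmem s hs))
    -- the open cover of Y
    set 𝒰 : Set (Set Y) :=
      ((fun s => (Subtype.val ⁻¹' V s : Set Y)) '' S) ∪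
        {(Subtype.val ⁻¹' (closure G)ᶜ : Set Y)} with h𝒰
    have hopen : ∀ u ∈ 𝒰, IsOpen u := by
      rintro u (⟨s, hs, rfl⟩ | rfl)
      · exact (hVopen s hs).preimage continuous_subtype_val
      · exact (isClosed_closure.isOpen_compl).preimage continuous_subtype_val
    have hcov : ⋃₀ 𝒰 = Set.univ := by
      ext y
      simp only [Set.mem_univ, iff_true, Set.mem_sUnion]
      by_cases hy : (y : X) ∈ closure G
      · obtain ⟨s, hs, hys⟩ := Set.mem_iUnion₂.1 (hGcl hy)
        exact ⟨Subtype.val ⁻¹' V s, Or.inl ⟨s, hs, rfl⟩, hys⟩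
      · exact ⟨Subtype.val ⁻¹' (closure G)ᶜ, Or.inr rfl, hy⟩
    obtain ⟨𝒱, h𝒱sub, h𝒱cnt, h𝒱dense⟩ := hWL 𝒰 hopen hcov
    -- the countable set of indices used
    set C : Set X := {s ∈ S | (Subtype.val ⁻¹' V s : Set Y) ∈ 𝒱} with hC
    have hCcnt : C.Countable := by
      apply Set.countable_of_injective_of_countable_image
        (f := fun s => (Subtype.val ⁻¹' V s : Set Y))
      · intro a ha b hb hab
        by_contra hne
        have haY : a ∈ Y := hSsubY ha.1
        have hab' : (Subtype.val ⁻¹' V a : Set Y) = Subtype.val ⁻¹' V b := hab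
        have : (⟨a, haY⟩ : Y) ∈ (Subtype.val ⁻¹' V b : Set Y) := by
          rw [← hab']; exact hVmem a ha.1
        exact absurd (Set.not_disjoint_iff.2 ⟨a, hVmem a ha.1, this⟩)
          (fun h => h (hVdisj a ha.1 b hb.1 hne))
      · exact h𝒱cnt.mono (by rintro u ⟨s, hs, rfl⟩; exact hs.2)
    -- pick a point of S not used
    have : ¬ S ⊆ C := fun h => hS (hCcnt.mono h)
    obtain ⟨s₀, hs₀S, hs₀C⟩ := Set.not_subset.1 this
    -- the neighbourhood witnessing non-density
    set N : Set Y := Subtype.val ⁻¹' (V s₀ ∩ G) with hN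
    have hNopen : IsOpen N :=
      ((hVopen s₀ hs₀S).inter hGopen).preimage continuous_subtype_val
    have hNne : N.Nonempty :=
      ⟨⟨s₀, hSsubY hs₀S⟩, hVmem s₀ hs₀S, hSG hs₀S⟩
    obtain ⟨y, hyN, u, hu𝒱, hyu⟩ := h𝒱dense.inter_open_nonempty N hNopen hNne
    rcases h𝒱sub hu𝒱 with ⟨s, hsS, rfl⟩ | rfl
    · rcases eq_or_ne s s₀ with rfl | hne
      · exact hs₀C ⟨hsS, hu𝒱⟩
      · exact absurd (Set.not_disjoint_iff.2 ⟨(y : X), hyu, hyN.1⟩)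
          (fun h => h (hVdisj s hsS s₀ hs₀S hne))
    · exact hyu (subset_closure hyN.2)
  refine ⟨fun h => ?_, main⟩
  obtain ⟨Y, hWL, hcov⟩ := h (fun x => if x ∈ S then V x else Sᶜ) (by
    intro x
    by_cases hx : x ∈ S
    · rw [if_pos hx]; exact ⟨hVopen x hx, hVmem x hx⟩
    · rw [if_neg hx]; exact ⟨hScl.isOpen_compl, hx⟩)
  exact main Y hcov hWL
end

section
/- Every space with a G_delta-diagonal of rank 3 has a regular G_delta-diagonal. -/
def stN {X : Type*} (U : Set (Set X)) (x : X) : ℕ → Set X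
  | 0 => {x}
  | n + 1 => ⋃₀ {u ∈ U | (u ∩ stN U x n).Nonempty}

/-- Every space with a G_δ-diagonal of rank 3 has a regular G_δ-diagonal. -/
theorem stmt11 {X : Type*} [TopologicalSpace X]
    (U : ℕ → Set (Set X))
    (hopen : ∀ k, ∀ u ∈ U k, IsOpen u)
    (hcov : ∀ k, ⋃₀ (U k) = Set.univ)
    (hrank3 : ∀ x : X, ⋂ k, stN (U k) x 3 = {x}) :
    ∃ W : ℕ → Set (X × X),
      (∀ n, IsOpen (W n)) ∧
      (∀ n, {p : X × X | p.1 = p.2} ⊆ W n) ∧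
      ⋂ n, closure (W n) = {p : X × X | p.1 = p.2} := by
  classical
  have hdiag : ∀ n, {p : X × X | p.1 = p.2} ⊆ ⋃ u ∈ U n, u ×ˢ u := by
    intro n p hp
    obtain ⟨x, y⟩ := p
    simp only [Set.mem_setOf_eq] at hp
    subst hp
    have hx : x ∈ ⋃₀ (U n) := by rw [hcov n]; trivial
    obtain ⟨u, hu, hxu⟩ := hx
    exact Set.mem_biUnion hu ⟨hxu, hxu⟩
  refine ⟨fun k => ⋃ u ∈ U k, u ×ˢ u, ?_, hdiag, ?_⟩
  · intro n
    exact isOpen_biUnion fun u hu => (hopen n u hu).prod (hopen n u hu)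
  · apply Set.Subset.antisymm
    · rintro ⟨x, y⟩ hxy
      simp only [Set.mem_iInter] at hxy
      have hy : y ∈ ⋂ k, stN (U k) x 3 := by
        refine Set.mem_iInter.2 fun k => ?_
        have hx : x ∈ ⋃₀ (U k) := by rw [hcov k]; trivial
        have hy' : y ∈ ⋃₀ (U k) := by rw [hcov k]; trivial
        obtain ⟨u, hu, hxu⟩ := hx
        obtain ⟨v, hv, hyv⟩ := hy'
        have hm : ((u ×ˢ v) ∩ ⋃ w ∈ U k, w ×ˢ w).Nonempty :=
          mem_closure_iff.1 (hxy k) _ ((hopen k u hu).prod (hopen k v hv)) ⟨hxu, hyv⟩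
        obtain ⟨⟨a, b⟩, ⟨⟨hau, hbv⟩, hw⟩⟩ := hm
        simp only [Set.mem_iUnion, Set.mem_prod] at hw
        obtain ⟨w, hwU, haw, hbw⟩ := hw
        show y ∈ stN (U k) x 3
        refine Set.mem_sUnion.2 ⟨v, ⟨hv, ⟨b, hbv, ?_⟩⟩, hyv⟩
        refine Set.mem_sUnion.2 ⟨w, ⟨hwU, ⟨a, haw, ?_⟩⟩, hbw⟩
        exact Set.mem_sUnion.2 ⟨u, ⟨hu, ⟨x, hxu, rfl⟩⟩, hau⟩
      rw [hrank3 x] at hy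
      simpa using hy.symm
    · intro p hp
      exact Set.mem_iInter.2 fun n => subset_closure (hdiag n hp)
end

section
/- Every Moore space has a G_delta-diagonal of rank 2. -/
def star' {X : Type*} (U : Set (Set X)) (x : X) : Set X := ⋃₀ {u ∈ U | x ∈ u}

/-- Every Moore space (a regular space with a development) has a G_δ-diagonal of rank 2. -/
theorem stmt12 {X : Type*} [TopologicalSpace X] [T1Space X] [RegularSpace X]
    (U : ℕ → Set (Set X))
    (hopen : ∀ n, ∀ u ∈ U n, IsOpen u)
    (hcov : ∀ n, ⋃₀ (U n) = Set.univ)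
    (hdev : ∀ (x : X) (O : Set X), IsOpen O → x ∈ O → ∃ n, star' (U n) x ⊆ O) :
    ∃ V : ℕ → Set (Set X),
      (∀ k, ∀ v ∈ V k, IsOpen v) ∧ (∀ k, ⋃₀ (V k) = Set.univ) ∧
      (∀ x : X, ⋂ k, stN (V k) x 2 = {x}) := by
  refine ⟨fun k => {w | ∃ u ∈ U (Nat.unpair k).1, ∃ u' ∈ U (Nat.unpair k).2, w = u ∩ u'},
    ?_, ?_, ?_⟩
  · rintro k v ⟨u, hu, u', hu', rfl⟩
    exact (hopen _ u hu).inter (hopen _ u' hu')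
  · intro k
    ext z
    simp only [Set.mem_sUnion, Set.mem_univ, iff_true]
    have h1 : z ∈ ⋃₀ (U (Nat.unpair k).1) := (hcov _).symm ▸ Set.mem_univ z
    have h2 : z ∈ ⋃₀ (U (Nat.unpair k).2) := (hcov _).symm ▸ Set.mem_univ z
    obtain ⟨u, hu, hz⟩ := h1
    obtain ⟨u', hu', hz'⟩ := h2
    exact ⟨u ∩ u', ⟨u, hu, u', hu', rfl⟩, hz, hz'⟩
  · intro x
    apply Set.eq_singleton_iff_unique_mem.mpr
    constructor
    · -- x belongs to each stN 2
      refine Set.mem_iInter.mpr fun k => ?_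
      have h1 : x ∈ ⋃₀ (U (Nat.unpair k).1) := (hcov _).symm ▸ Set.mem_univ x
      have h2 : x ∈ ⋃₀ (U (Nat.unpair k).2) := (hcov _).symm ▸ Set.mem_univ x
      obtain ⟨u, hu, hx⟩ := h1
      obtain ⟨u', hu', hx'⟩ := h2
      have hw : x ∈ u ∩ u' := ⟨hx, hx'⟩
      have hwV : (u ∩ u') ∈ {w | ∃ a ∈ U (Nat.unpair k).1, ∃ b ∈ U (Nat.unpair k).2, w = a ∩ b} :=
        ⟨u, hu, u', hu', rfl⟩
      have h1' : x ∈ stN {w | ∃ a ∈ U (Nat.unpair k).1, ∃ b ∈ U (Nat.unpair k).2, w = a ∩ b} x 1 :=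
        ⟨u ∩ u', ⟨hwV, ⟨x, hw, rfl⟩⟩, hw⟩
      exact ⟨u ∩ u', ⟨hwV, ⟨x, hw, h1'⟩⟩, hw⟩
    · -- uniqueness
      intro y hy
      by_contra hne
      obtain ⟨O, W, hO, hW, hxO, hyW, hdisj⟩ := t2_separation hne
      obtain ⟨m, hm⟩ := hdev y O hO hxO
      obtain ⟨n, hn⟩ := hdev x W hW hyW
      set k := Nat.pair n m with hk
      have hy2 := Set.mem_iInter.mp hy k
      -- unfold stN at k
      obtain ⟨v2, ⟨hv2V, z, hz2, hz1⟩, hyv2⟩ := hy2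
      obtain ⟨v1, ⟨hv1V, w, hw1, hw0⟩, hzv1⟩ := hz1
      -- hw0 : w ∈ {x}
      have hwx : w = x := hw0
      obtain ⟨u1, hu1, u1', hu1', rfl⟩ := hv1V
      obtain ⟨u2, hu2, u2', hu2', rfl⟩ := hv2V
      rw [Nat.unpair_pair] at hu1 hu2 hu1' hu2'
      -- x ∈ u1 (since w = x ∈ u1 ∩ u1'), so u1 ⊆ star'(U n) x ⊆ W
      have hxu1 : x ∈ u1 := by rw [hwx] at hw1; exact hw1.1
      have hu1W : u1 ⊆ W := fun p hp => hn ⟨u1, ⟨hu1, hxu1⟩, hp⟩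
      -- y ∈ u2' (member of U m), so u2' ⊆ star'(U m) y ⊆ O
      have hyu2' : y ∈ u2' := hyv2.2
      have hu2O : u2' ⊆ O := fun p hp => hm ⟨u2', ⟨hu2', hyu2'⟩, hp⟩
      -- z ∈ v2 ∩ v1, so z ∈ u2' and z ∈ u1, contradicting disjointness
      have : z ∈ O ∩ W := ⟨hu2O hz2.2, hu1W hzv1.1⟩
      exact (Set.disjoint_iff.mp hdisj) this
end

section
/- If X is a space with a sequence (U_n)_{n<omega} of open covers such that for all distinct x,y in X there is n with St(x,U_n) disjoint from St(y,U_n), and if X has cardinality greater than 2^{aleph_0}, then there is n_0 < omega and an uncountable set S in X such that {St(x,U_{n_0}) : x in S} is a pairwise disjoint family of open sets; in particular the cellularity of X is uncountable. -/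
open Cardinal Set

attribute [local instance] Classical.propDecidable

universe u

noncomputable section ERSection

/-- Index type: a well-order of type `ω₁`. -/
private abbrev ERIdx : Type u := (Cardinal.aleph 1 : Cardinal.{u}).ord.ToType

private lemma ERIdx.mk_eq : #(ERIdx.{u}) = Cardinal.aleph 1 := Cardinal.mk_ord_toType _

private instance : Nonempty (ERIdx.{u}) := by
  rw [← Cardinal.mk_ne_zero_iff, ERIdx.mk_eq]
  exact (Cardinal.aleph0_lt_aleph_one.trans_le' (by simp)).ne'

private lemma ERIdx.countable_Iio (w : ERIdx.{u}) : (Set.Iio w).Countable :=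
  (Cardinal.countable_iff_lt_aleph_one _).mpr (Cardinal.mk_Iio_ord_toType w)

private lemma ERIdx.mk_Iio_le (w : ERIdx.{u}) : #(Set.Iio w) ≤ ℵ₀ :=
  Cardinal.mk_le_aleph0_iff.mpr (ERIdx.countable_Iio w).to_subtype

/-- Any countable subset of `ERIdx` is strictly bounded above. -/
private lemma ERIdx.exists_bound (s : Set (ERIdx.{u})) (hs : s.Countable) :
    ∃ w, ∀ v ∈ s, v < w := by
  by_contra h
  push_neg at h
  have hcover : (univ : Set (ERIdx.{u})) ⊆ ⋃ v ∈ s, Iic v := by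
    intro w _
    obtain ⟨v, hv, hle⟩ := h w
    exact mem_biUnion hv hle
  have h1 : #(⋃ v ∈ s, Iic v : Set (ERIdx.{u})) ≤ #s * ⨆ v : s, #(Iic v.1) :=
    Cardinal.mk_biUnion_le _ s
  have h2 : #s * ⨆ v : s, #(Iic v.1) ≤ ℵ₀ * ℵ₀ := by
    apply mul_le_mul'
    · exact Cardinal.mk_le_aleph0_iff.mpr hs.to_subtype
    · apply ciSup_le'
      intro v
      have : (Iic v.1 : Set (ERIdx.{u})) ⊆ insert v.1 (Iio v.1) := by
        intro x hx
        rcases eq_or_lt_of_le (mem_Iic.mp hx) with h' | h'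
        · exact Or.inl h'
        · exact Or.inr h'
      calc #(Iic v.1 : Set (ERIdx.{u})) ≤ #(insert v.1 (Iio v.1) : Set (ERIdx.{u})) :=
            Cardinal.mk_le_mk_of_subset this
        _ ≤ #(Iio v.1 : Set (ERIdx.{u})) + 1 := Cardinal.mk_insert_le
        _ ≤ ℵ₀ + 1 := by gcongr; exact ERIdx.mk_Iio_le v.1
        _ ≤ ℵ₀ := by simp
  have h3 : (Cardinal.aleph 1 : Cardinal.{u}) ≤ ℵ₀ := by
    calc (Cardinal.aleph 1 : Cardinal.{u}) = #(ERIdx.{u}) := ERIdx.mk_eq.symm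
      _ = #(univ : Set (ERIdx.{u})) := Cardinal.mk_univ.symm
      _ ≤ #(⋃ v ∈ s, Iic v : Set (ERIdx.{u})) := Cardinal.mk_le_mk_of_subset hcover
      _ ≤ ℵ₀ * ℵ₀ := h1.trans h2
      _ = ℵ₀ := Cardinal.aleph0_mul_aleph0
  exact absurd h3 (not_le.mpr Cardinal.aleph0_lt_aleph_one)

variable {X : Type u}

/-- Choose, if possible, a point outside `range g` realizing the type `t` over `g`. -/
private def wit (c : X → X → ℕ) [Nonempty X] (g : ℕ → X) (t : ℕ → ℕ) : X :=
  if h : ∃ v, v ∉ Set.range g ∧ ∀ n, c v (g n) = t n then h.choose else Classical.arbitrary X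

private lemma wit_spec (c : X → X → ℕ) [Nonempty X] (g : ℕ → X) (t : ℕ → ℕ)
    (h : ∃ v, v ∉ Set.range g ∧ ∀ n, c v (g n) = t n) :
    wit c g t ∉ Set.range g ∧ ∀ n, c (wit c g t) (g n) = t n := by
  simp only [wit, dif_pos h]
  exact h.choose_spec

/-- One-step closure: add witnesses for all countable types over `A`. -/
private def erStep (c : X → X → ℕ) [Nonempty X] (A : Set X) : Set X :=
  A ∪ (fun p : (ℕ → X) × (ℕ → ℕ) => wit c p.1 p.2) '' {p | Set.range p.1 ⊆ A}

private lemma subset_erStep (c : X → X → ℕ) [Nonempty X] (A : Set X) : A ⊆ erStep c A :=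
  subset_union_left

private lemma wit_mem_erStep (c : X → X → ℕ) [Nonempty X] {A : Set X} {g : ℕ → X}
    (t : ℕ → ℕ) (hg : Set.range g ⊆ A) : wit c g t ∈ erStep c A :=
  Or.inr ⟨(g, t), hg, rfl⟩

private lemma mk_erStep_le (c : X → X → ℕ) [Nonempty X] {A : Set X}
    (hA : #A ≤ 2 ^ (ℵ₀ : Cardinal.{u})) : #(erStep c A) ≤ 2 ^ (ℵ₀ : Cardinal.{u}) := by
  have hone : (ℵ₀ : Cardinal.{u}) ≤ 2 ^ (ℵ₀ : Cardinal.{u}) := (Cardinal.cantor _).le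
  -- bound the set of parameters
  have hparam : #({p : (ℕ → X) × (ℕ → ℕ) | Set.range p.1 ⊆ A}) ≤ 2 ^ (ℵ₀ : Cardinal.{u}) := by
    have hinj : Function.Injective
        (fun p : {p : (ℕ → X) × (ℕ → ℕ) // Set.range p.1 ⊆ A} =>
          (fun n => (⟨p.1.1 n, p.2 (Set.mem_range_self n)⟩, p.1.2 n) : ℕ → (↥A × ℕ))) := by
      rintro ⟨⟨g₁, t₁⟩, h₁⟩ ⟨⟨g₂, t₂⟩, h₂⟩ h
      have h' := fun n => congrFun h n
      simp only [Subtype.mk.injEq, Prod.mk.injEq]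
      constructor
      · funext n
        exact congrArg (fun q => (q.1 : X)) (h' n)
      · funext n
        exact congrArg Prod.snd (h' n)
    calc #({p : (ℕ → X) × (ℕ → ℕ) | Set.range p.1 ⊆ A})
        ≤ #(ℕ → (A × ℕ)) := Cardinal.mk_le_of_injective hinj
      _ = Cardinal.lift.{0} #(↥A × ℕ) ^ Cardinal.lift.{u} #ℕ := Cardinal.mk_arrow _ _
      _ = #(↥A × ℕ) ^ (ℵ₀ : Cardinal.{u}) := by simp
      _ ≤ (2 ^ (ℵ₀ : Cardinal.{u})) ^ (ℵ₀ : Cardinal.{u}) := by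
          apply Cardinal.power_le_power_right
          calc #(↥A × ℕ) = #A * ℵ₀ := by simp
            _ ≤ (2 ^ (ℵ₀ : Cardinal.{u})) * (2 ^ (ℵ₀ : Cardinal.{u})) := by
                exact mul_le_mul' hA hone
            _ = 2 ^ (ℵ₀ : Cardinal.{u}) := Cardinal.mul_eq_self hone
      _ = 2 ^ ((ℵ₀ : Cardinal.{u}) * ℵ₀) := (Cardinal.power_mul).symm
      _ = 2 ^ (ℵ₀ : Cardinal.{u}) := by rw [Cardinal.aleph0_mul_aleph0]
  calc #(erStep c A) ≤ #A + #((fun p : (ℕ → X) × (ℕ → ℕ) => wit c p.1 p.2) ''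
        {p | Set.range p.1 ⊆ A}) := Cardinal.mk_union_le _ _
    _ ≤ (2 ^ (ℵ₀ : Cardinal.{u})) + (2 ^ (ℵ₀ : Cardinal.{u})) :=
        add_le_add hA (Cardinal.mk_image_le.trans hparam)
    _ = 2 ^ (ℵ₀ : Cardinal.{u}) := Cardinal.add_eq_self hone

/-- The ω₁-iteration of the closure step. -/
private def famA (c : X → X → ℕ) [Nonempty X] (x₀ : X) : ERIdx.{u} → Set X :=
  fun w => insert x₀ (erStep c (⋃ v : {v : ERIdx.{u} // v < w}, famA c x₀ v.1))
  termination_by w => w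
  decreasing_by exact v.2

private lemma famA_def (c : X → X → ℕ) [Nonempty X] (x₀ : X) (w : ERIdx.{u}) :
    famA c x₀ w = insert x₀ (erStep c (⋃ v : {v : ERIdx.{u} // v < w}, famA c x₀ v.1)) := by
  rw [famA]

private lemma mk_famA_le (c : X → X → ℕ) [Nonempty X] (x₀ : X) (w : ERIdx.{u}) :
    #(famA c x₀ w) ≤ 2 ^ (ℵ₀ : Cardinal.{u}) := by
  have hone : (ℵ₀ : Cardinal.{u}) ≤ 2 ^ (ℵ₀ : Cardinal.{u}) := (Cardinal.cantor _).le
  induction w using WellFoundedLT.induction with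
  | _ w IH =>
    rw [famA_def]
    have hU : #(⋃ v : {v : ERIdx.{u} // v < w}, famA c x₀ v.1) ≤ 2 ^ (ℵ₀ : Cardinal.{u}) := by
      calc #(⋃ v : {v : ERIdx.{u} // v < w}, famA c x₀ v.1)
          ≤ #{v : ERIdx.{u} // v < w} * ⨆ v : {v : ERIdx.{u} // v < w}, #(famA c x₀ v.1) :=
            Cardinal.mk_iUnion_le _
        _ ≤ ℵ₀ * (2 ^ (ℵ₀ : Cardinal.{u})) := by
            apply mul_le_mul'
            · exact ERIdx.mk_Iio_le w
            · exact ciSup_le' fun v => IH v.1 v.2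
        _ ≤ (2 ^ (ℵ₀ : Cardinal.{u})) * (2 ^ (ℵ₀ : Cardinal.{u})) :=
            mul_le_mul' hone le_rfl
        _ = 2 ^ (ℵ₀ : Cardinal.{u}) := Cardinal.mul_eq_self hone
    calc #(insert x₀ (erStep c (⋃ v : {v : ERIdx.{u} // v < w}, famA c x₀ v.1)) : Set X)
        ≤ #(erStep c (⋃ v : {v : ERIdx.{u} // v < w}, famA c x₀ v.1)) + 1 :=
          Cardinal.mk_insert_le
      _ ≤ (2 ^ (ℵ₀ : Cardinal.{u})) + 1 := by gcongr; exact mk_erStep_le c hU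
      _ ≤ (2 ^ (ℵ₀ : Cardinal.{u})) + (2 ^ (ℵ₀ : Cardinal.{u})) :=
          add_le_add le_rfl (Cardinal.one_le_aleph0.trans hone)
      _ = 2 ^ (ℵ₀ : Cardinal.{u}) := Cardinal.add_eq_self hone

/-- The closed set. -/
private def erA (c : X → X → ℕ) [Nonempty X] (x₀ : X) : Set X :=
  ⋃ w : ERIdx.{u}, famA c x₀ w

private lemma mk_erA_le (c : X → X → ℕ) [Nonempty X] (x₀ : X) :
    #(erA c x₀) ≤ 2 ^ (ℵ₀ : Cardinal.{u}) := by
  have hone : (ℵ₀ : Cardinal.{u}) ≤ 2 ^ (ℵ₀ : Cardinal.{u}) := (Cardinal.cantor _).le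
  calc #(erA c x₀) ≤ #(ERIdx.{u}) * ⨆ w : ERIdx.{u}, #(famA c x₀ w) := Cardinal.mk_iUnion_le _
    _ ≤ (Cardinal.aleph 1) * (2 ^ (ℵ₀ : Cardinal.{u})) := by
        apply mul_le_mul'
        · exact ERIdx.mk_eq.le
        · exact ciSup_le' fun w => mk_famA_le c x₀ w
    _ ≤ (2 ^ (ℵ₀ : Cardinal.{u})) * (2 ^ (ℵ₀ : Cardinal.{u})) := by
        gcongr
        rw [Cardinal.two_power_aleph0]
        exact Cardinal.aleph_one_le_continuum
    _ = 2 ^ (ℵ₀ : Cardinal.{u}) := Cardinal.mul_eq_self hone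

private lemma x₀_mem_erA (c : X → X → ℕ) [Nonempty X] (x₀ : X) : x₀ ∈ erA c x₀ := by
  obtain ⟨w⟩ : Nonempty (ERIdx.{u}) := inferInstance
  exact mem_iUnion.mpr ⟨w, by rw [famA_def]; exact mem_insert _ _⟩

/-- Closure property: every countable type over `erA` realized outside `erA` is realized
inside `erA`. -/
private lemma erA_closure (c : X → X → ℕ) [Nonempty X] (x₀ : X) {u : X}
    (hu : u ∉ erA c x₀) {B : Set X} (hBsub : B ⊆ erA c x₀) (hBc : B.Countable) :
    ∃ v ∈ erA c x₀, v ∉ B ∧ ∀ b ∈ B, c v b = c u b := by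
  rcases B.eq_empty_or_nonempty with rfl | hne
  · exact ⟨x₀, x₀_mem_erA c x₀, by simp⟩
  obtain ⟨g, hg⟩ := hBc.exists_eq_range hne
  have hmem : ∀ n : ℕ, ∃ w : ERIdx.{u}, g n ∈ famA c x₀ w := by
    intro n
    have : g n ∈ B := by rw [hg]; exact mem_range_self n
    exact mem_iUnion.mp (hBsub this)
  choose F hF using hmem
  obtain ⟨w, hw⟩ := ERIdx.exists_bound (Set.range F) (countable_range F)
  have hsub : Set.range g ⊆ ⋃ v : {v : ERIdx.{u} // v < w}, famA c x₀ v.1 := by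
    rintro x ⟨n, rfl⟩
    exact mem_iUnion.mpr ⟨⟨F n, hw _ (mem_range_self n)⟩, hF n⟩
  set t : ℕ → ℕ := fun n => c u (g n) with ht
  have hex : ∃ v, v ∉ Set.range g ∧ ∀ n, c v (g n) = t n := by
    refine ⟨u, ?_, fun n => rfl⟩
    rw [← hg]
    exact fun hmem => hu (hBsub hmem)
  obtain ⟨hnotin, hty⟩ := wit_spec c g t hex
  refine ⟨wit c g t, ?_, by rwa [hg], ?_⟩
  · have : wit c g t ∈ famA c x₀ w := by
      rw [famA_def]
      exact mem_insert_iff.mpr (Or.inr (wit_mem_erStep c t hsub))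
    exact mem_iUnion.mpr ⟨w, this⟩
  · intro b hb
    rw [hg] at hb
    obtain ⟨n, rfl⟩ := hb
    exact hty n

/-- The transfinite sequence realizing the type of `u` over all initial segments. -/
private def erSeq (c : X → X → ℕ) [Nonempty X] (x₀ u : X) : ERIdx.{u} → X :=
  fun w =>
    if h : ∃ v ∈ erA c x₀,
        v ∉ Set.range (fun p : {p : ERIdx.{u} // p < w} => erSeq c x₀ u p.1) ∧
        ∀ b ∈ Set.range (fun p : {p : ERIdx.{u} // p < w} => erSeq c x₀ u p.1), c v b = c u b
    then h.choose else u
  termination_by w => w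
  decreasing_by all_goals exact p.2

private lemma erSeq_def (c : X → X → ℕ) [Nonempty X] (x₀ u : X) (w : ERIdx.{u}) :
    erSeq c x₀ u w =
      if h : ∃ v ∈ erA c x₀,
          v ∉ Set.range (fun p : {p : ERIdx.{u} // p < w} => erSeq c x₀ u p.1) ∧
          ∀ b ∈ Set.range (fun p : {p : ERIdx.{u} // p < w} => erSeq c x₀ u p.1), c v b = c u b
      then h.choose else u := by
  rw [erSeq]

private lemma erSeq_spec (c : X → X → ℕ) [Nonempty X] (x₀ u : X) (hu : u ∉ erA c x₀)
    (w : ERIdx.{u}) :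
    erSeq c x₀ u w ∈ erA c x₀ ∧
    erSeq c x₀ u w ∉ Set.range (fun p : {p : ERIdx.{u} // p < w} => erSeq c x₀ u p.1) ∧
    ∀ b ∈ Set.range (fun p : {p : ERIdx.{u} // p < w} => erSeq c x₀ u p.1),
      c (erSeq c x₀ u w) b = c u b := by
  induction w using WellFoundedLT.induction with
  | _ w IH =>
    have hBsub : Set.range (fun p : {p : ERIdx.{u} // p < w} => erSeq c x₀ u p.1) ⊆
        erA c x₀ := by
      rintro x ⟨p, rfl⟩
      exact (IH p.1 p.2).1
    have hBc : (Set.range (fun p : {p : ERIdx.{u} // p < w} => erSeq c x₀ u p.1)).Countable := by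
      have : Countable {p : ERIdx.{u} // p < w} := (ERIdx.countable_Iio w).to_subtype
      exact countable_range _
    obtain ⟨v, hv1, hv2, hv3⟩ := erA_closure c x₀ hu hBsub hBc
    have h : ∃ v ∈ erA c x₀,
        v ∉ Set.range (fun p : {p : ERIdx.{u} // p < w} => erSeq c x₀ u p.1) ∧
        ∀ b ∈ Set.range (fun p : {p : ERIdx.{u} // p < w} => erSeq c x₀ u p.1), c v b = c u b :=
      ⟨v, hv1, hv2, hv3⟩
    rw [erSeq_def, dif_pos h]
    exact h.choose_spec

private lemma erSeq_injective (c : X → X → ℕ) [Nonempty X] (x₀ u : X) (hu : u ∉ erA c x₀) :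
    Function.Injective (erSeq c x₀ u) := by
  have key : ∀ v w : ERIdx.{u}, v < w → erSeq c x₀ u v ≠ erSeq c x₀ u w := by
    intro v w hvw heq
    exact (erSeq_spec c x₀ u hu w).2.1 ⟨⟨v, hvw⟩, heq⟩
  intro v w h
  rcases lt_trichotomy v w with h' | h' | h'
  · exact absurd h (key v w h')
  · exact h'
  · exact absurd h.symm (key w v h')

/-- Erdős–Rado for pairs with countably many colors: if `|X| > 2^ℵ₀`, every symmetric-ish
coloring of pairs has an uncountable weakly homogeneous set. -/
private lemma erdosRado_pairs (c : X → X → ℕ)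
    (hbig : 2 ^ (ℵ₀ : Cardinal.{u}) < #X) :
    ∃ (n : ℕ) (S : Set X), ¬S.Countable ∧
      ∀ x ∈ S, ∀ y ∈ S, x ≠ y → c x y = n ∨ c y x = n := by
  haveI hXne : Nonempty X := by
    rw [← Cardinal.mk_ne_zero_iff]
    intro h
    rw [h] at hbig
    exact (Cardinal.zero_le _).not_gt hbig
  have x₀ : X := Classical.arbitrary X
  -- pick `u` outside the closed set
  have hex_u : ∃ u : X, u ∉ erA c x₀ := by
    by_contra h
    push_neg at h
    have : (univ : Set X) ⊆ erA c x₀ := fun x _ => h x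
    have := (Cardinal.mk_le_mk_of_subset this).trans (mk_erA_le c x₀)
    rw [Cardinal.mk_univ] at this
    exact absurd hbig this.not_gt
  obtain ⟨u, hu⟩ := hex_u
  -- pigeonhole on colors with `u`
  have hfib : ∃ n : ℕ, ¬((fun v : ERIdx.{u} => c u (erSeq c x₀ u v)) ⁻¹' {n}).Countable := by
    by_contra h
    push_neg at h
    have : (univ : Set (ERIdx.{u})).Countable := by
      have : (univ : Set (ERIdx.{u})) =
          ⋃ n : ℕ, (fun v : ERIdx.{u} => c u (erSeq c x₀ u v)) ⁻¹' {n} := by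
        ext v; simp
      rw [this]
      exact countable_iUnion h
    rw [countable_univ_iff] at this
    have := Cardinal.mk_le_aleph0_iff.mpr this
    rw [ERIdx.mk_eq] at this
    exact absurd this (not_le.mpr Cardinal.aleph0_lt_aleph_one)
  obtain ⟨n, hn⟩ := hfib
  refine ⟨n, erSeq c x₀ u '' ((fun v : ERIdx.{u} => c u (erSeq c x₀ u v)) ⁻¹' {n}), ?_, ?_⟩
  · intro hS
    exact hn (((hS.preimage (erSeq_injective c x₀ u hu)).mono (subset_preimage_image _ _)))
  · rintro x ⟨v, hv, rfl⟩ y ⟨w, hw, rfl⟩ hxy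
    have hvw : v ≠ w := fun h => hxy (by rw [h])
    have key : ∀ a b : ERIdx.{u}, a < b → (fun v => c u (erSeq c x₀ u v)) a = n →
        c (erSeq c x₀ u b) (erSeq c x₀ u a) = n := by
      intro a b hab ha
      have := (erSeq_spec c x₀ u hu b).2.2 (erSeq c x₀ u a) ⟨⟨a, hab⟩, rfl⟩
      rw [this]
      exact ha
    rcases lt_trichotomy v w with h' | h' | h'
    · exact Or.inr (key v w h' hv)
    · exact absurd h' hvw
    · exact Or.inl (key w v h' hw)

end ERSection

/-- If a sequence of open covers separates distinct points by disjoint stars and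
`|X| > 2^ℵ₀`, then some cover admits an uncountable set of points with pairwise
disjoint stars; in particular the cellularity of `X` is uncountable. -/
theorem stmt16 {X : Type*} [TopologicalSpace X]
    (U : ℕ → Set (Set X))
    (hopen : ∀ n, ∀ u ∈ U n, IsOpen u)
    (hcov : ∀ n, ⋃₀ (U n) = Set.univ)
    (hsep : ∀ x y : X, x ≠ y → ∃ n, Disjoint (star' (U n) x) (star' (U n) y))
    (hbig : 2 ^ Cardinal.aleph0 < Cardinal.mk X) :
    ∃ (n₀ : ℕ) (S : Set X), ¬S.Countable ∧
      (∀ x ∈ S, IsOpen (star' (U n₀) x) ∧ (star' (U n₀) x).Nonempty) ∧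
      (∀ x ∈ S, ∀ y ∈ S, x ≠ y → Disjoint (star' (U n₀) x) (star' (U n₀) y)) := by
  classical
  set c : X → X → ℕ := fun x y => if h : x ≠ y then (hsep x y h).choose else 0 with hc
  obtain ⟨n₀, S, hSc, hhom⟩ := erdosRado_pairs c hbig
  have hdisj : ∀ x ∈ S, ∀ y ∈ S, x ≠ y →
      Disjoint (star' (U n₀) x) (star' (U n₀) y) := by
    intro x hx y hy hxy
    rcases hhom x hx y hy hxy with h | h
    · rw [hc] at h
      simp only [dif_pos hxy] at h
      exact h ▸ (hsep x y hxy).choose_spec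
    · rw [hc] at h
      simp only [dif_pos (Ne.symm hxy)] at h
      exact (h ▸ (hsep y x (Ne.symm hxy)).choose_spec).symm
  refine ⟨n₀, S, hSc, ?_, hdisj⟩
  intro x _
  constructor
  · exact isOpen_sUnion fun u hu => hopen n₀ u hu.1
  · have : x ∈ ⋃₀ (U n₀) := by rw [hcov n₀]; trivial
    obtain ⟨u, hu, hxu⟩ := this
    exact ⟨x, mem_sUnion.mpr ⟨u, ⟨hu, hxu⟩, hxu⟩⟩
end

section
/- A weakly Lindelöf space cannot contain an uncountable closed discrete set S and a pairwise disjoint open family {W_x : x in S, x in W_x} together with an open V containing S whose closure is contained in the union of the W_x. -/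
def WeaklyLindelof (X : Type*) [TopologicalSpace X] : Prop :=
  ∀ 𝒰 : Set (Set X), (∀ u ∈ 𝒰, IsOpen u) → ⋃₀ 𝒰 = Set.univ →
    ∃ 𝒱 ⊆ 𝒰, 𝒱.Countable ∧ Dense (⋃₀ 𝒱)

/-- A weakly Lindelöf space cannot contain an uncountable closed discrete set `S`,
a pairwise disjoint family of open sets `W x ∋ x` for `x ∈ S`, and an open `V ⊇ S`
with `closure V ⊆ ⋃ x ∈ S, W x`. -/
theorem stmt18 {Y : Type*} [TopologicalSpace Y] (hWL : WeaklyLindelof Y)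
    (S : Set Y) (hunc : ¬S.Countable) (hScl : IsClosed S) (hSd : DiscreteTopology S)
    (W : Y → Set Y) (hWopen : ∀ x ∈ S, IsOpen (W x)) (hWmem : ∀ x ∈ S, x ∈ W x)
    (hWdisj : ∀ x ∈ S, ∀ y ∈ S, x ≠ y → Disjoint (W x) (W y))
    (V : Set Y) (hV : IsOpen V) (hSV : S ⊆ V)
    (hVcl : closure V ⊆ ⋃ x ∈ S, W x) :
    False := by
  classical
  set 𝒰 : Set (Set Y) := insert (closure V)ᶜ (W '' S) with h𝒰
  have hopen : ∀ u ∈ 𝒰, IsOpen u := by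
    rintro u (rfl | ⟨x, hx, rfl⟩)
    · exact isClosed_closure.isOpen_compl
    · exact hWopen x hx
  have hcov : ⋃₀ 𝒰 = Set.univ := by
    ext y
    simp only [Set.mem_sUnion, Set.mem_univ, iff_true]
    by_cases hy : y ∈ closure V
    · obtain ⟨t, ⟨x, rfl⟩, ht⟩ := hVcl hy
      simp only [Set.mem_iUnion] at ht
      obtain ⟨hxS, hyW⟩ := ht
      exact ⟨W x, Set.mem_insert_of_mem _ ⟨x, hxS, rfl⟩, hyW⟩
    · exact ⟨(closure V)ᶜ, Set.mem_insert _ _, hy⟩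
  obtain ⟨𝒱, h𝒱sub, h𝒱cnt, h𝒱dense⟩ := hWL 𝒰 hopen hcov
  -- the set of x ∈ S with W x ∈ 𝒱 is countable
  have hTcnt : {x ∈ S | W x ∈ 𝒱}.Countable := by
    have hinj : Set.InjOn W {x ∈ S | W x ∈ 𝒱} := by
      intro a ha b hb hab
      by_contra hne
      have := hWdisj a ha.1 b hb.1 hne
      rw [hab] at this
      exact (this.le_bot ⟨hWmem b hb.1, hWmem b hb.1⟩)
    have : W '' {x ∈ S | W x ∈ 𝒱} ⊆ 𝒱 := by rintro _ ⟨x, hx, rfl⟩; exact hx.2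
    exact Set.countable_of_injective_of_countable_image hinj (h𝒱cnt.mono this)
  obtain ⟨x, hxS, hxT⟩ : ∃ x ∈ S, W x ∉ 𝒱 := by
    by_contra h
    push_neg at h
    exact hunc (hTcnt.mono (fun x hx => Set.mem_sep hx (h x hx)))
  have hne : (W x ∩ V).Nonempty := ⟨x, hWmem x hxS, hSV hxS⟩
  have hop : IsOpen (W x ∩ V) := (hWopen x hxS).inter hV
  obtain ⟨p, hp𝒱, hpWV⟩ := h𝒱dense.exists_mem_open hop hne
  obtain ⟨u, hu𝒱, hpu⟩ := hp𝒱
  rcases h𝒱sub hu𝒱 with h | ⟨y, hyS, rfl⟩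
  · exact (h ▸ hpu) (subset_closure hpWV.2)
  · rcases eq_or_ne x y with rfl | hxy
    · exact hxT hu𝒱
    · exact (hWdisj x hxS y hyS hxy).le_bot ⟨hpWV.1, hpu⟩
end
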